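/- For every τ in the upper half-plane ℍ, with q := e^{2πiτ} and ζ₆ := e^{iπ/3}, the identity −4(2πiτ)³ + ∑_{n≥1} ( ∑_{m|n} ψ(m)/m³ ) qⁿ = −48·( 24·𝓛i₃(τ,ζ₆) + 21·𝓛i₃(τ,ζ₆²) + 8·𝓛i₃(τ,−1) + 7·𝓛i₃(τ,1) ) + 80π³iτ − 16ζ(3) holds, where all series converge absolutely. -/

import Mathlib

/-!
For `(z, c_z) = (ζ₆, 24), (ζ₆², 21), (-1, 8), (1, 7)` one has `ψ(m) = -48 ∑ c_z (z^m + z^{-m})`,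
i.e. `ψ(m) = -96 (24 cos(mπ/3) + 21 cos(2mπ/3) + 8 (-1)^m + 7)`. Expanding every `Li₃(qⁿ z^{±1})`
as a double series in `(n, k)` and regrouping along `nk = N` (a Lambert series) turns the
`q`-part of `-48 ∑ c_z 𝓛i₃(τ, z)` into `∑ (∑_{m ∣ N} ψ(m)/m³) q^N`. The constant
`∑ c_z Li₃(z)` is computed from its real part, `-(1/96) ∑ ψ(k)/k³ = -ζ(3)/3` because `ψ` is a
combination of the indicators of `2 ∣ k`, `3 ∣ k`, `6 ∣ k`, and its imaginary part, a sine series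
evaluated by the Bernoulli polynomial `B₃` at `1/6` and `1/3`. What remains is a polynomial
identity in `π`, `τ` and the logarithms `πi/3`, `2πi/3`, `πi`, `0`.
-/

/-- The even mod-6 character `ψ` with `ψ(1)=ψ(5)=−48`, `ψ(2)=ψ(4)=720`,
`ψ(3)=384`, `ψ(6)=−5760` (6-periodic). -/
def psi (n : ℕ) : ℤ :=
  if n % 6 = 1 then -48 else if n % 6 = 2 then 720 else if n % 6 = 3 then 384
  else if n % 6 = 4 then 720 else if n % 6 = 5 then -48 else -5760

/-- The trilogarithm `Li₃(z) = ∑_{k≥1} z^k/k³`. -/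
noncomputable def Li3 (z : ℂ) : ℂ := ∑' k : ℕ, z^(k+1) / ((k:ℂ)+1)^3

/-- The Beilinson–Levin elliptic trilogarithm `𝓛i₃(τ,z)` for `τ ∈ ℍ` and `z`
on the unit circle, with `q = e^{2πiτ}` and principal branch logarithms. -/
noncomputable def eLi3 (τ z : ℂ) : ℂ :=
  Li3 z +
    (∑' n : ℕ, (Li3 (Complex.exp (2*Real.pi*Complex.I*τ)^(n+1) * z) +
        Li3 (Complex.exp (2*Real.pi*Complex.I*τ)^(n+1) * z⁻¹))) -
    (-(Complex.log z)^3/12 + (2*Real.pi*Complex.I*τ) * (Complex.log z)^2/24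
      - (2*Real.pi*Complex.I*τ)^3/720)

/-- `ζ(3) = ∑_{k≥1} 1/k³`. -/
noncomputable def zeta3 : ℝ := ∑' k : ℕ, 1 / ((k:ℝ)+1)^3

open Real

local notation "ω" => Complex.exp (π * Complex.I / 3)

-- Unlike `zeta3` and `Li3`, these series start at `k = 0`, whose term is `x / 0 = 0`.
lemma hasSum_zeta3 : HasSum (fun k : ℕ => 1 / (k : ℝ) ^ 3) zeta3 := by
  refine (hasSum_nat_add_iff' 1).mp ?_
  have h := (summable_nat_add_iff 1).mpr (Real.summable_one_div_nat_pow.mpr (by norm_num : 1 < 3))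
  simpa [zeta3] using h.hasSum

lemma summable_pow_div_cube {z : ℂ} (hz : ‖z‖ ≤ 1) :
    Summable (fun k : ℕ => z ^ k / (k : ℂ) ^ 3) := by
  refine .of_norm_bounded (Real.summable_one_div_nat_pow.mpr (by norm_num : 1 < 3)) fun k => ?_
  rw [norm_div, norm_pow, norm_pow, Complex.norm_natCast]
  exact div_le_div_of_nonneg_right (pow_le_one₀ (norm_nonneg z) hz) (by positivity)

lemma hasSum_Li3 {z : ℂ} (hz : ‖z‖ ≤ 1) : HasSum (fun k : ℕ => z ^ k / (k : ℂ) ^ 3) (Li3 z) := by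
  refine (hasSum_nat_add_iff' 1).mp ?_
  simpa [Li3] using ((summable_nat_add_iff 1).mpr (summable_pow_div_cube hz)).hasSum

lemma cos_nat_mul_pi_div_three (n : ℕ) :
    cos (n * (π / 3)) =
      if n % 6 = 0 then 1 else if n % 6 = 3 then -1
      else if n % 6 = 1 ∨ n % 6 = 5 then 1 / 2 else -1 / 2 := by
  obtain ⟨t, r, hr, rfl⟩ : ∃ t r, r < 6 ∧ n = 6 * t + r :=
    ⟨n / 6, n % 6, Nat.mod_lt _ (by norm_num), (Nat.div_add_mod n 6).symm⟩
  have hmod : (6 * t + r) % 6 = r := by omega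
  rw [show ((6 * t + r : ℕ) : ℝ) * (π / 3) = r * (π / 3) + t * (2 * π) by push_cast; ring,
    cos_add_nat_mul_two_pi, hmod]
  interval_cases r
  · simp
  · simp [cos_pi_div_three]
  · rw [show ((2 : ℕ) : ℝ) * (π / 3) = π - π / 3 by push_cast; ring, cos_pi_sub, cos_pi_div_three]
    norm_num
  · rw [show ((3 : ℕ) : ℝ) * (π / 3) = π by push_cast; ring, cos_pi]
    norm_num
  · rw [show ((4 : ℕ) : ℝ) * (π / 3) = π / 3 + π by push_cast; ring, cos_add_pi, cos_pi_div_three]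
    norm_num
  · rw [show ((5 : ℕ) : ℝ) * (π / 3) = 2 * π - π / 3 by push_cast; ring, cos_two_pi_sub,
      cos_pi_div_three]
    norm_num

lemma psi_eq_cos (m : ℕ) :
    (psi m : ℝ) =
      -96 * (24 * cos (m * (π / 3)) + 21 * cos (m * (2 * π / 3)) + 8 * (-1) ^ m + 7) := by
  rw [show (m : ℝ) * (2 * π / 3) = ((2 * m : ℕ) : ℝ) * (π / 3) by push_cast; ring,
    cos_nat_mul_pi_div_three, cos_nat_mul_pi_div_three, neg_one_pow_eq_pow_mod_two]
  obtain h | h := Nat.mod_two_eq_zero_or_one m <;> rw [h] <;> simp only [psi] <;>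
    split_ifs <;> first | omega | norm_num

lemma psi_eq_ite (m : ℕ) :
    (psi m : ℝ) = -48 + 768 * (if 2 ∣ m then 1 else 0) + 432 * (if 3 ∣ m then 1 else 0)
      - 6912 * (if 6 ∣ m then 1 else 0) := by
  simp only [psi, Nat.dvd_iff_mod_eq_zero]
  split_ifs <;> first | omega | norm_num

lemma hasSum_ite_dvd_one_div_cube {d : ℕ} (hd : d ≠ 0) :
    HasSum (fun k : ℕ => if d ∣ k then 1 / (k : ℝ) ^ 3 else 0) (zeta3 / d ^ 3) := by
  refine (Function.Injective.hasSum_iff (mul_right_injective₀ hd) ?_).mp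
    ((hasSum_zeta3.div_const ((d : ℝ) ^ 3)).congr_fun fun j => ?_)
  · rintro k hk
    rw [if_neg]
    rintro ⟨j, rfl⟩
    exact hk ⟨j, rfl⟩
  · simp only [Function.comp_apply, dvd_mul_right, if_true, Nat.cast_mul]
    ring

lemma hasSum_psi_div_cube : HasSum (fun k : ℕ => (psi k : ℝ) / (k : ℝ) ^ 3) (32 * zeta3) := by
  have h := (((hasSum_zeta3.mul_left (-48)).add
    ((hasSum_ite_dvd_one_div_cube two_ne_zero).mul_left 768)).add
    ((hasSum_ite_dvd_one_div_cube three_ne_zero).mul_left 432)).sub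
    ((hasSum_ite_dvd_one_div_cube (by norm_num : (6 : ℕ) ≠ 0)).mul_left 6912)
  rw [show -48 * zeta3 + 768 * (zeta3 / (2 : ℕ) ^ 3) + 432 * (zeta3 / (3 : ℕ) ^ 3)
      - 6912 * (zeta3 / (6 : ℕ) ^ 3) = 32 * zeta3 by push_cast; ring] at h
  refine h.congr_fun fun k => ?_
  rw [psi_eq_ite]
  split_ifs <;> ring

section SixthRoot

open Complex

lemma exp_ofReal_mul_I_pow (θ : ℝ) (k : ℕ) :
    exp (θ * I) ^ k = Real.cos (k * θ) + Real.sin (k * θ) * I := by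
  rw [← Complex.exp_nat_mul, ← mul_assoc, ← ofReal_natCast, ← ofReal_mul, exp_mul_I, ← ofReal_cos,
    ← ofReal_sin]

lemma exp_ofReal_mul_I_pow_add_inv_pow (θ : ℝ) (k : ℕ) :
    exp (θ * I) ^ k + (exp (θ * I))⁻¹ ^ k = 2 * Real.cos (k * θ) := by
  rw [← Complex.exp_neg, ← neg_mul, ← ofReal_neg, exp_ofReal_mul_I_pow, exp_ofReal_mul_I_pow,
    mul_neg, Real.cos_neg, Real.sin_neg, ofReal_neg]
  ring

lemma exp_pi_mul_I_div_three : ω = exp ((π / 3 : ℝ) * I) := by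
  push_cast
  ring_nf

lemma exp_pi_mul_I_div_three_sq : ω ^ 2 = exp ((2 * π / 3 : ℝ) * I) := by
  rw [← Complex.exp_nat_mul]
  push_cast
  ring_nf

lemma norm_exp_pi_mul_I_div_three : ‖ω‖ = 1 := by
  rw [exp_pi_mul_I_div_three, norm_exp_ofReal_mul_I]

lemma log_exp_pi_mul_I_div_three : log ω = π * I / 3 := by
  have him : (π * I / 3 : ℂ).im = π / 3 := by simp
  exact log_exp (by rw [him]; linarith [pi_pos]) (by rw [him]; linarith [pi_pos])

lemma log_exp_pi_mul_I_div_three_sq : log (ω ^ 2) = 2 * π * I / 3 := by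
  have him : (2 * π * I / 3 : ℂ).im = 2 * π / 3 := by simp
  rw [← Complex.exp_nat_mul, show ((2 : ℕ) : ℂ) * (π * I / 3) = 2 * π * I / 3 by push_cast; ring]
  exact log_exp (by rw [him]; linarith [pi_pos]) (by rw [him]; linarith [pi_pos])

lemma psi_eq_sum_pow_add_inv_pow (m : ℕ) :
    (psi m : ℂ) = -48 * (24 * (ω ^ m + ω⁻¹ ^ m)
      + 21 * ((ω ^ 2) ^ m + (ω ^ 2)⁻¹ ^ m)
      + 8 * ((-1) ^ m + (-1)⁻¹ ^ m) + 7 * (1 ^ m + 1⁻¹ ^ m)) := by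
  rw [exp_pi_mul_I_div_three_sq, exp_pi_mul_I_div_three, exp_ofReal_mul_I_pow_add_inv_pow,
    exp_ofReal_mul_I_pow_add_inv_pow, inv_neg, inv_one, one_pow, ← ofReal_intCast, psi_eq_cos]
  push_cast
  ring

end SixthRoot

lemma bernoulliFun_three (x : ℝ) : bernoulliFun 3 x = x ^ 3 - 3 / 2 * x ^ 2 + 1 / 2 * x := by
  rw [bernoulliFun, Polynomial.bernoulli_def]
  simp only [Finset.sum_range_succ, Finset.sum_range_zero, Polynomial.map_add,
    Polynomial.map_monomial, Polynomial.eval_add, Polynomial.eval_monomial]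
  norm_num [bernoulli_eq_bernoulli'_of_ne_one, bernoulli'_two, bernoulli'_three, Nat.choose]
  ring

lemma hasSum_sin_div_cube {x : ℝ} (hx : x ∈ Set.Icc 0 1) :
    HasSum (fun n : ℕ => sin (2 * π * n * x) / (n : ℝ) ^ 3)
      (2 * π ^ 3 / 3 * (x ^ 3 - 3 / 2 * x ^ 2 + 1 / 2 * x)) := by
  have h := hasSum_one_div_nat_pow_mul_sin one_ne_zero hx
  rw [← bernoulliFun, show 2 * 1 + 1 = 3 from rfl, bernoulliFun_three,
    show (-1 : ℝ) ^ (1 + 1) * (2 * π) ^ 3 / 2 / (Nat.factorial 3 : ℕ) = 2 * π ^ 3 / 3 by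
      norm_num [Nat.factorial]; ring] at h
  exact h.congr_fun fun n => by ring

open Complex in
lemma Li3_combination_sixth_roots :
    24 * Li3 ω + 21 * Li3 (ω ^ 2) + 8 * Li3 (-1) + 7 * Li3 1
      = -(zeta3 : ℂ) / 3 + 34 * π ^ 3 / 27 * I := by
  have hω : ‖ω‖ ≤ 1 := norm_exp_pi_mul_I_div_three.le
  have hω2 : ‖ω ^ 2‖ ≤ 1 := by rw [norm_pow, norm_exp_pi_mul_I_div_three, one_pow]
  have hLi3 := (((hasSum_Li3 hω).mul_left 24).add ((hasSum_Li3 hω2).mul_left 21)).add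
    ((hasSum_Li3 (by simp : ‖(-1 : ℂ)‖ ≤ 1)).mul_left 8) |>.add
    ((hasSum_Li3 (by simp : ‖(1 : ℂ)‖ ≤ 1)).mul_left 7)
  have hre := hasSum_psi_div_cube.mul_left (-1 / 96)
  have him := ((hasSum_sin_div_cube (x := 1 / 6) (by norm_num)).mul_left 24).add
    ((hasSum_sin_div_cube (x := 1 / 3) (by norm_num)).mul_left 21)
  have h := (hasSum_ofReal.mpr hre).add ((hasSum_ofReal.mpr him).mul_right I)
  -- the real part of the `k`-th term is `-ψ(k) / (96 k³)`, by `psi_eq_cos`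
  refine (hLi3.unique (h.congr_fun fun k => ?_)).trans ?_
  · rw [exp_pi_mul_I_div_three_sq, exp_pi_mul_I_div_three, exp_ofReal_mul_I_pow,
      exp_ofReal_mul_I_pow, psi_eq_cos]
    push_cast
    ring_nf
  · push_cast
    ring

section LambertSeries

variable {q z : ℂ}

lemma summable_pow_mul_pow_div_cube (hq : ‖q‖ < 1) (hz : ‖z‖ ≤ 1) :
    Summable (fun c : ℕ+ × ℕ+ => z ^ (c.2 : ℕ) * q ^ (c.1 * c.2 : ℕ) / ((c.2 : ℕ) : ℂ) ^ 3) := by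
  refine .of_norm_bounded (summable_prod_mul_pow 0 (r := ‖q‖) (by rwa [norm_norm])) fun c => ?_
  have hc : (1 : ℝ) ≤ ((c.2 : ℕ) : ℝ) ^ 3 := one_le_pow₀ (by exact_mod_cast c.2.pos)
  simp only [norm_div, norm_mul, norm_pow, Complex.norm_natCast, pow_zero, one_mul]
  calc ‖z‖ ^ (c.2 : ℕ) * ‖q‖ ^ (c.1 * c.2 : ℕ) / ((c.2 : ℕ) : ℝ) ^ 3
      ≤ ‖q‖ ^ (c.1 * c.2 : ℕ) / 1 := by
        gcongr
        exact mul_le_of_le_one_left (by positivity) (pow_le_one₀ (norm_nonneg z) hz)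
    _ = ‖q‖ ^ (c.1 * c.2 : ℕ) := div_one _

lemma hasSum_Li3_pow_succ_mul (hq : ‖q‖ < 1) (hz : ‖z‖ ≤ 1) :
    HasSum (fun n : ℕ => Li3 (q ^ (n + 1) * z))
      (∑' c : ℕ+ × ℕ+, z ^ (c.2 : ℕ) * q ^ (c.1 * c.2 : ℕ) / ((c.2 : ℕ) : ℂ) ^ 3) := by
  refine (hasSum_pnat_iff_hasSum_succ (f := fun k => Li3 (q ^ k * z))).mp
    ((summable_pow_mul_pow_div_cube hq hz).hasSum.prod_fiberwise fun n => ?_)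
  have hqz : ‖q ^ (n : ℕ) * z‖ ≤ 1 := by
    rw [norm_mul, norm_pow]
    exact mul_le_one₀ (pow_le_one₀ (norm_nonneg q) hq.le) (norm_nonneg z) hz
  refine ((hasSum_pnat_iff (f := fun k : ℕ => (q ^ (n : ℕ) * z) ^ k / (k : ℂ) ^ 3)).mpr
    (by simpa using hasSum_Li3 hqz)).congr_fun fun k => ?_
  rw [mul_pow, pow_mul]
  ring

lemma hasSum_divisorSum_pow_div_cube (hq : ‖q‖ < 1) (hz : ‖z‖ ≤ 1) :
    HasSum (fun n : ℕ => (∑ m ∈ (n + 1).divisors, z ^ m / (m : ℂ) ^ 3) * q ^ (n + 1))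
      (∑' c : ℕ+ × ℕ+, z ^ (c.2 : ℕ) * q ^ (c.1 * c.2 : ℕ) / ((c.2 : ℕ) : ℂ) ^ 3) := by
  refine (hasSum_pnat_iff_hasSum_succ
    (f := fun k => (∑ m ∈ k.divisors, z ^ m / (m : ℂ) ^ 3) * q ^ k)).mp
    (((sigmaAntidiagonalEquivProd.hasSum_iff.mpr (summable_pow_mul_pow_div_cube hq hz).hasSum).sigma
      fun n => hasSum_fintype _).congr_fun fun n => ?_)
  rw [Finset.sum_mul,
    ← Nat.sum_divisorsAntidiagonal' (fun _ m => z ^ m / (m : ℂ) ^ 3 * q ^ (n : ℕ)),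
    ← Finset.sum_coe_sort]
  refine Fintype.sum_congr _ _ fun b => ?_
  obtain ⟨hb, -⟩ := Nat.mem_divisorsAntidiagonal.mp b.2
  simp only [sigmaAntidiagonalEquivProd, divisorsAntidiagonalFactors, PNat.mk_coe,
    Equiv.coe_fn_mk, Function.comp_apply, hb]
  ring

lemma hasSum_divisorSum_pow_add_inv_pow_div_cube (hq : ‖q‖ < 1) (hz : ‖z‖ = 1) :
    HasSum (fun n : ℕ => (∑ m ∈ (n + 1).divisors, (z ^ m + z⁻¹ ^ m) / (m : ℂ) ^ 3) * q ^ (n + 1))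
      (∑' n : ℕ, (Li3 (q ^ (n + 1) * z) + Li3 (q ^ (n + 1) * z⁻¹))) := by
  have hz' : ‖z⁻¹‖ ≤ 1 := by rw [norm_inv, hz, inv_one]
  rw [((hasSum_Li3_pow_succ_mul hq hz.le).add (hasSum_Li3_pow_succ_mul hq hz')).tsum_eq]
  refine ((hasSum_divisorSum_pow_div_cube hq hz.le).add
    (hasSum_divisorSum_pow_div_cube hq hz')).congr_fun fun n => ?_
  rw [← add_mul, ← Finset.sum_add_distrib]
  simp only [add_div]

end LambertSeries

lemma hasSum_psi_divisorSum {q : ℂ} (hq : ‖q‖ < 1) :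
    HasSum (fun n : ℕ => (∑ m ∈ (n + 1).divisors, (psi m : ℂ) / (m : ℂ) ^ 3) * q ^ (n + 1))
      (-48 * (24 * ∑' n : ℕ, (Li3 (q ^ (n + 1) * ω) + Li3 (q ^ (n + 1) * ω⁻¹))
        + 21 * ∑' n : ℕ, (Li3 (q ^ (n + 1) * ω ^ 2) + Li3 (q ^ (n + 1) * (ω ^ 2)⁻¹))
        + 8 * ∑' n : ℕ, (Li3 (q ^ (n + 1) * (-1)) + Li3 (q ^ (n + 1) * (-1)⁻¹))
        + 7 * ∑' n : ℕ, (Li3 (q ^ (n + 1) * 1) + Li3 (q ^ (n + 1) * 1⁻¹)))) := by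
  have hω2 : ‖ω ^ 2‖ = 1 := by rw [norm_pow, norm_exp_pi_mul_I_div_three, one_pow]
  have hS {z : ℂ} (hz : ‖z‖ = 1) := hasSum_divisorSum_pow_add_inv_pow_div_cube hq hz
  refine (((((hS norm_exp_pi_mul_I_div_three).mul_left 24).add ((hS hω2).mul_left 21)).add
    ((hS (by simp : ‖(-1 : ℂ)‖ = 1)).mul_left 8) |>.add
    ((hS (by simp : ‖(1 : ℂ)‖ = 1)).mul_left 7)).mul_left (-48)).congr_fun fun n => ?_
  simp only [Finset.sum_mul, Finset.mul_sum, ← Finset.sum_add_distrib]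
  refine Finset.sum_congr rfl fun m _ => ?_
  rw [psi_eq_sum_pow_add_inv_pow]
  ring

theorem stmt8 (τ : ℂ) (hτ : 0 < τ.im) :
    Summable (fun n : ℕ => (∑ m ∈ (n+1).divisors, (psi m : ℂ) / (m:ℂ)^3) *
      Complex.exp (2*Real.pi*Complex.I*τ)^(n+1)) ∧
    -4*(2*Real.pi*Complex.I*τ)^3 +
      (∑' n : ℕ, (∑ m ∈ (n+1).divisors, (psi m : ℂ) / (m:ℂ)^3) *
        Complex.exp (2*Real.pi*Complex.I*τ)^(n+1)) =
    -48 * (24 * eLi3 τ (Complex.exp (Real.pi*Complex.I/3))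
        + 21 * eLi3 τ (Complex.exp (Real.pi*Complex.I/3)^2)
        + 8 * eLi3 τ (-1)
        + 7 * eLi3 τ 1)
      + 80 * Real.pi^3 * Complex.I * τ - 16 * (zeta3 : ℂ) := by
  have hS := hasSum_psi_divisorSum (UpperHalfPlane.norm_exp_two_pi_I_lt_one ⟨τ, hτ⟩)
  refine ⟨hS.summable, ?_⟩
  rw [hS.tsum_eq]
  simp only [eLi3, log_exp_pi_mul_I_div_three, log_exp_pi_mul_I_div_three_sq, Complex.log_neg_one,
    Complex.log_one]
  simp only [div_pow, mul_pow, Complex.I_sq, Complex.I_pow_three]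
  linear_combination 48 * Li3_combination_sixth_roots
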